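/- arXiv:2202.13335 — 6 statements merged into one kernel-verified Lean document; each statement's English description precedes it below -/
import Mathlib

section
/- Let G be an n-vertex graph, A ⊆ V(G), and d a positive integer. If M is a maximal matching of the bipartite graph G[A, V(G)\A], then the number of equivalence classes of the relation ≡^A_{d,1} on subsets of A is at most (2d+2)^{|M|}. Consequently, nec_{d,1}(A) ≤ (2d+2)^{mmw(A)}, where mmw(A) is the size of a maximum matching of G[A, V(G)\A]. -/
open SimpleGraph

variable {V : Type*} [Fintype V] [DecidableEq V]

/-- The bipartite cut graph `G[A, V \ A]`. -/
def cutGraph (G : SimpleGraph V) (A : Set V) : SimpleGraph V where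
  Adj u v := G.Adj u v ∧ ((u ∈ A ∧ v ∉ A) ∨ (u ∉ A ∧ v ∈ A))
  symm := by
    constructor; intro u v h
    exact ⟨h.1.symm, h.2.elim (fun hx => Or.inr ⟨hx.2, hx.1⟩) (fun hx => Or.inl ⟨hx.2, hx.1⟩)⟩
  loopless := by constructor; intro v h; exact G.irrefl h.1

/-- The (d,1)-neighbor equivalence over `A`, as a setoid on subsets of `A`. -/
def necSetoid (G : SimpleGraph V) (A : Set V) (d : ℕ) : Setoid {S : Set V // S ⊆ A} :=
  ⟨fun B C => ∀ v ∉ A,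
      min d (G.neighborSet v ∩ B.1).ncard = min d (G.neighborSet v ∩ C.1).ncard,
   ⟨fun _ _ _ => rfl,
    fun h v hv => (h v hv).symm,
    fun h1 h2 v hv => (h1 v hv).trans (h2 v hv)⟩⟩

/-! A maximal matching `M` of the cut graph covers every cut edge at one endpoint at least. Hence a
class of `≡^A_{d,1}` is determined by recording, for each edge `ab ∈ M` with `a ∈ A`, whether `a`
lies in the set (2 choices) and the `d`-capped number of its neighbours at `b` (`d + 1` choices):
a vertex `v ∉ A` covered by `M` is such a `b`, and all neighbours in `A` of an uncovered `v` are
such an `a`. -/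

theorem Setoid.card_quotient_le_of_eq_imp_rel {α β : Type*} [Finite β] (s : Setoid α)
    (f : α → β) (hf : ∀ x y, f x = f y → s x y) : Nat.card (Quotient s) ≤ Nat.card β :=
  Nat.card_le_card_of_injective (fun q => f q.out) fun x y h => by
    simpa only [Quotient.out_eq] using Quotient.sound (s := s) (hf _ _ h)

theorem SimpleGraph.Subgraph.IsMatching.mem_support_or_of_maximal {W : Type*} {H : SimpleGraph W}
    {M : H.Subgraph} (hM : M.IsMatching)
    (hmax : ∀ M' : H.Subgraph, M'.IsMatching → M ≤ M' → M' = M) {u v : W} (huv : H.Adj u v) :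
    u ∈ M.support ∨ v ∈ M.support := by
  by_contra! ⟨hu, hv⟩
  have hdisj : Disjoint M.support (H.subgraphOfAdj huv).support := by
    rw [support_subgraphOfAdj, Set.disjoint_right]
    rintro x (rfl | rfl) <;> assumption
  have hsup := hmax _ (hM.sup (Subgraph.IsMatching.subgraphOfAdj huv) hdisj) le_sup_left
  have hadj : (M ⊔ H.subgraphOfAdj huv).Adj u v := Or.inr (by simp)
  exact hu ⟨v, hsup ▸ hadj⟩

section Fingerprint

omit [Fintype V] [DecidableEq V]

theorem cutGraph_adj_mem_of_not_mem {G : SimpleGraph V} {A : Set V} {u v : V}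
    (h : (cutGraph G A).Adj u v) (hu : u ∉ A) : v ∈ A := by
  rcases h.2 with h' | h'
  exacts [absurd h'.1 hu, h'.2]

variable (G : SimpleGraph V) (A : Set V) (d : ℕ) (M : (cutGraph G A).Subgraph)

/-- An edge of the cut graph has exactly one endpoint in `A`; quantifying over the endpoints of `e`
avoids choosing an orientation. -/
noncomputable def cutFingerprint (S : {S : Set V // S ⊆ A}) : M.edgeSet → Prop × Fin (d + 1) :=
  fun e => ((∃ a ∈ (e : Sym2 V), a ∈ S.1),
    ⟨min d {x ∈ S.1 | ∃ b ∈ (e : Sym2 V), b ∉ A ∧ G.Adj b x}.ncard, by omega⟩)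

variable {G A d M}

theorem cutFingerprint_fst_iff (S : {S : Set V // S ⊆ A}) {a b : V} (hab : M.Adj a b)
    (hb : b ∉ A) : (cutFingerprint G A d M S ⟨s(a, b), hab⟩).1 ↔ a ∈ S.1 := by
  simp only [cutFingerprint, Sym2.mem_iff, exists_eq_or_imp, exists_eq_left, or_iff_left_iff_imp]
  exact fun hbS => absurd (S.2 hbS) hb

theorem cutFingerprint_snd_eq (S : {S : Set V // S ⊆ A}) {v b : V} (hvb : M.Adj v b)
    (hv : v ∉ A) :
    ((cutFingerprint G A d M S ⟨s(v, b), hvb⟩).2 : ℕ) = min d (G.neighborSet v ∩ S.1).ncard := by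
  have hb := cutGraph_adj_mem_of_not_mem (M.adj_sub hvb) hv
  simp only [cutFingerprint, Sym2.mem_iff, exists_eq_or_imp, exists_eq_left, not_true_eq_false,
    false_and, or_false, hb]
  congr 2
  ext x
  simp [hv, and_comm]

theorem necSetoid_rel_of_cutFingerprint_eq (hM : M.IsMatching)
    (hmax : ∀ M' : (cutGraph G A).Subgraph, M'.IsMatching → M ≤ M' → M' = M)
    {B C : {S : Set V // S ⊆ A}} (h : cutFingerprint G A d M B = cutFingerprint G A d M C) :
    necSetoid G A d B C := by
  intro v hv
  by_cases hvM : v ∈ M.support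
  · obtain ⟨b, hvb⟩ := hvM
    rw [← cutFingerprint_snd_eq B hvb hv, ← cutFingerprint_snd_eq C hvb hv, h]
  have hcovered {S : {S : Set V // S ⊆ A}} {a : V} (ha : a ∈ G.neighborSet v ∩ S.1) :
      ∃ b, ∃ hab : M.Adj a b, b ∉ A := by
    have huv : (cutGraph G A).Adj v a := ⟨ha.1, .inr ⟨hv, S.2 ha.2⟩⟩
    obtain ⟨b, hab⟩ := (hM.mem_support_or_of_maximal hmax huv).resolve_left hvM
    exact ⟨b, hab, fun hb => (M.adj_sub hab).2.elim (·.2 hb) (·.1 (S.2 ha.2))⟩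
  have hsub {S T : {S : Set V // S ⊆ A}}
      (hST : cutFingerprint G A d M S = cutFingerprint G A d M T) :
      G.neighborSet v ∩ S.1 ⊆ G.neighborSet v ∩ T.1 := fun a ha => by
    obtain ⟨b, hab, hb⟩ := hcovered ha
    have haS := (cutFingerprint_fst_iff (d := d) S hab hb).2 ha.2
    rw [hST] at haS
    exact ⟨ha.1, (cutFingerprint_fst_iff T hab hb).1 haS⟩
  rw [(hsub h).antisymm (hsub h.symm)]

theorem card_quotient_necSetoid_le [Finite V] (hM : M.IsMatching)
    (hmax : ∀ M' : (cutGraph G A).Subgraph, M'.IsMatching → M ≤ M' → M' = M) :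
    Nat.card (Quotient (necSetoid G A d)) ≤ (2 * d + 2) ^ M.edgeSet.ncard := by
  calc Nat.card (Quotient (necSetoid G A d))
      ≤ Nat.card (M.edgeSet → Prop × Fin (d + 1)) :=
        Setoid.card_quotient_le_of_eq_imp_rel _ _ fun _ _ =>
          necSetoid_rel_of_cutFingerprint_eq hM hmax
    _ = (2 * d + 2) ^ M.edgeSet.ncard := by
        rw [Nat.card_fun, Nat.card_prod, Nat.card_coe_set_eq, Nat.card_eq_fintype_card,
          Fintype.card_prop, Nat.card_eq_fintype_card, Fintype.card_fin]
        ring_nf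

end Fingerprint

theorem stmt4_general (G : SimpleGraph V) (A : Set V) (d : ℕ)
    (M : (cutGraph G A).Subgraph) (hM : M.IsMatching)
    (hmax : ∀ M' : (cutGraph G A).Subgraph, M'.IsMatching → M ≤ M' → M' = M) :
    Nat.card (Quotient (necSetoid G A d)) ≤ (2 * d + 2) ^ M.edgeSet.ncard ∧
    ∀ w : ℕ,
      IsGreatest {n | ∃ M'' : (cutGraph G A).Subgraph, M''.IsMatching ∧ M''.edgeSet.ncard = n} w →
      Nat.card (Quotient (necSetoid G A d)) ≤ (2 * d + 2) ^ w := by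
  have hcard := card_quotient_necSetoid_le (d := d) hM hmax
  refine ⟨hcard, fun w hw => hcard.trans ?_⟩
  exact Nat.pow_le_pow_right (by omega) (hw.2 ⟨M, hM, rfl⟩)

theorem stmt4 (G : SimpleGraph V) (A : Set V) (d : ℕ) (hd : 0 < d)
    (M : (cutGraph G A).Subgraph) (hM : M.IsMatching)
    (hmax : ∀ M' : (cutGraph G A).Subgraph, M'.IsMatching → M ≤ M' → M' = M) :
    Nat.card (Quotient (necSetoid G A d)) ≤ (2 * d + 2) ^ M.edgeSet.ncard ∧
    ∀ w : ℕ,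
      IsGreatest {n | ∃ M'' : (cutGraph G A).Subgraph, M''.IsMatching ∧ M''.edgeSet.ncard = n} w →
      Nat.card (Quotient (necSetoid G A d)) ≤ (2 * d + 2) ^ w :=
  stmt4_general G A d M hM hmax
end

section
/- Let G be a graph, A ⊆ V(G), and d a positive integer. Then the number of equivalence classes of ≡^A_{d,1} on subsets of A is at most (d+1)^{mw(A)}, where mw(A) = |{N(v) ∩ (V(G)\A) : v ∈ A}| is the number of distinct neighborhoods in V(G)\A of vertices of A. -/
open SimpleGraph

variable {V : Type*} [Fintype V] [DecidableEq V]

/-!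
For `v ∉ A`, the number of neighbours of `v` in `B ⊆ A` is the sum, over the neighbourhood types
`t = N(w) \ A` of vertices `w ∈ A` with `v ∈ t`, of the number of vertices of `B` of type `t`.
Truncating at `d` commutes with this sum once every summand is truncated at `d` as well, so the
class of `B` is determined by the vector of its type counts truncated at `d`, which takes at most
`(d + 1) ^ mw(A)` values.
-/

theorem Finset.min_sum_min {ι M : Type*} [AddCommMonoid M] [LinearOrder M]
    [CanonicallyOrderedAdd M] [IsOrderedAddMonoid M] (d : M) (s : Finset ι) (f : ι → M) :
    min d (∑ i ∈ s, min d (f i)) = min d (∑ i ∈ s, f i) := by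
  by_cases h : ∀ i ∈ s, f i ≤ d
  · rw [Finset.sum_congr rfl fun i hi => min_eq_right (h i hi)]
  · push Not at h
    obtain ⟨i, hi, hdi⟩ := h
    rw [min_eq_left, min_eq_left]
    · exact hdi.le.trans (Finset.single_le_sum (fun _ _ => zero_le) hi)
    · calc d = min d (f i) := (min_eq_left hdi.le).symm
        _ ≤ _ := Finset.single_le_sum (f := fun i => min d (f i)) (fun _ _ => zero_le) hi

open Finset in
theorem Set.ncard_inter_preimage_eq_sum {α β : Type*} [Finite α] (B : Set α) (τ : α → β)
    (T : Finset β) (p : β → Prop) [DecidablePred p] (h : Set.MapsTo τ B T) :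
    (B ∩ τ ⁻¹' {t | p t}).ncard = ∑ t ∈ T with p t, (B ∩ τ ⁻¹' {t}).ncard := by
  classical
  have := Fintype.ofFinite α
  have toFinset_eq (S : Set β) : (B ∩ τ ⁻¹' S).toFinset = {a ∈ B.toFinset | τ a ∈ S} := by
    ext; simp
  calc (B ∩ τ ⁻¹' {t | p t}).ncard = #{a ∈ B.toFinset | τ a ∈ {t ∈ T | p t}} := by
        rw [Set.ncard_eq_toFinset_card', toFinset_eq]
        congr 1
        ext a
        simp only [Finset.mem_filter, Set.mem_toFinset, Set.mem_ofPred_eq]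
        exact ⟨fun ⟨ha, hp⟩ => ⟨ha, h ha, hp⟩, fun ⟨ha, _, hp⟩ => ⟨ha, hp⟩⟩
    _ = ∑ t ∈ T with p t, #{a ∈ B.toFinset | τ a = t} :=
        (Finset.sum_card_fiberwise_eq_card_filter _ _ _).symm
    _ = ∑ t ∈ T with p t, (B ∩ τ ⁻¹' {t}).ncard := by
        simp only [Set.ncard_eq_toFinset_card', toFinset_eq, Set.mem_singleton_iff]

theorem Setoid.card_quotient_le_of_eq_imp {α β : Type*} [Finite β] (s : Setoid α) (f : α → β)
    (h : ∀ a b, f a = f b → s a b) : Nat.card (Quotient s) ≤ Nat.card β :=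
  Nat.card_le_card_of_injective (fun q => f q.out) fun q q' hq => by
    simpa using Quotient.sound (h _ _ hq)

namespace SimpleGraph

def neighborSetOutside (G : SimpleGraph V) (A : Set V) (w : V) : Set V :=
  G.neighborSet w ∩ Aᶜ

omit [Fintype V] [DecidableEq V] in
theorem neighborSet_inter_eq_preimage_neighborSetOutside (G : SimpleGraph V) {A : Set V} {v : V}
    (hv : v ∉ A) (B : Set V) :
    G.neighborSet v ∩ B = B ∩ G.neighborSetOutside A ⁻¹' {t | v ∈ t} := by
  ext w
  simp [neighborSetOutside, hv, G.adj_comm, and_comm]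

noncomputable def truncatedTypeCount (G : SimpleGraph V) (A : Set V) (d : ℕ)
    (B : {S : Set V // S ⊆ A}) :
    G.neighborSetOutside A '' A → Fin (d + 1) :=
  fun t => ⟨min d (B.1 ∩ G.neighborSetOutside A ⁻¹' {t.1}).ncard,
    Nat.lt_succ_of_le (min_le_left _ _)⟩

omit [DecidableEq V] in
theorem necSetoid_rel_of_truncatedTypeCount_eq (G : SimpleGraph V) {A : Set V} {d : ℕ}
    {B C : {S : Set V // S ⊆ A}} (h : G.truncatedTypeCount A d B = G.truncatedTypeCount A d C) :
    necSetoid G A d B C := by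
  classical
  intro v hv
  set T := (G.neighborSetOutside A '' A).toFinset
  have hmaps (D : {S : Set V // S ⊆ A}) : Set.MapsTo (G.neighborSetOutside A) D.1 T := by
    intro w hw
    simpa [T] using Set.mem_image_of_mem _ (D.2 hw)
  have min_ncard_eq (D : {S : Set V // S ⊆ A}) : min d (G.neighborSet v ∩ D.1).ncard =
      min d (∑ t ∈ T with v ∈ t, min d (D.1 ∩ G.neighborSetOutside A ⁻¹' {t}).ncard) := by
    rw [G.neighborSet_inter_eq_preimage_neighborSetOutside hv,
      Set.ncard_inter_preimage_eq_sum _ _ _ _ (hmaps D), Finset.min_sum_min]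
  rw [min_ncard_eq B, min_ncard_eq C]
  refine congrArg _ (Finset.sum_congr rfl fun t ht => ?_)
  have ht : t ∈ G.neighborSetOutside A '' A := by simpa [T] using (Finset.mem_filter.1 ht).1
  exact congrArg Fin.val (congrFun h ⟨t, ht⟩)

end SimpleGraph

theorem stmt5_general (G : SimpleGraph V) (A : Set V) (d : ℕ) :
    Nat.card (Quotient (necSetoid G A d)) ≤
      (d + 1) ^ ((fun v => G.neighborSet v ∩ Aᶜ) '' A).ncard :=
  calc Nat.card (Quotient (necSetoid G A d))
      ≤ Nat.card (G.neighborSetOutside A '' A → Fin (d + 1)) :=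
        Setoid.card_quotient_le_of_eq_imp _ (G.truncatedTypeCount A d)
          fun _ _ => G.necSetoid_rel_of_truncatedTypeCount_eq
    _ = (d + 1) ^ ((fun v => G.neighborSet v ∩ Aᶜ) '' A).ncard := by
        rw [Nat.card_fun, Nat.card_fin, Nat.card_coe_set_eq]
        rfl

theorem stmt5 (G : SimpleGraph V) (A : Set V) (d : ℕ) (hd : 0 < d) :
    Nat.card (Quotient (necSetoid G A d)) ≤
      (d + 1) ^ ((fun v => G.neighborSet v ∩ Aᶜ) '' A).ncard :=
  stmt5_general G A d
end

section
/- Let G be a graph and B ⊆ V(G). The number of consistent cuts of B, i.e., ordered bipartitions (B_L, B_R) of B (with possibly empty parts) such that no vertex of B_L is adjacent to a vertex of B_R, equals 2^{c}, where c is the number of connected components of the induced subgraph G[B]. Moreover, for any fixed vertex v ∈ B, the number of consistent cuts (B_L, B_R) of B with v ∈ B_L equals 2^{c−1}. -/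
open SimpleGraph

variable {V : Type*} [Fintype V] [DecidableEq V]

/-- A consistent cut of `B`: an ordered bipartition `(B_L, B_R)` of `B` with no
edge of `G` between the two sides. -/
def ConsCut (G : SimpleGraph V) (B : Set V) (p : Set V × Set V) : Prop :=
  p.1 ∪ p.2 = B ∧ Disjoint p.1 p.2 ∧ ∀ u ∈ p.1, ∀ v ∈ p.2, ¬ G.Adj u v

section Aux

variable (G : SimpleGraph V) (B : Set V)

/-- The cut associated to a set of components. -/
noncomputable def cutOf (S : Set (G.induce B).ConnectedComponent) : Set V × Set V :=
  (Subtype.val '' {u : B | (G.induce B).connectedComponentMk u ∈ S},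
   Subtype.val '' {u : B | (G.induce B).connectedComponentMk u ∉ S})

set_option linter.unusedSectionVars false in
lemma consCut_cutOf (S : Set (G.induce B).ConnectedComponent) : ConsCut G B (cutOf G B S) := by
  refine ⟨?_, ?_, ?_⟩
  · ext x
    simp only [cutOf, Set.mem_union, Set.mem_image, Set.mem_setOf_eq]
    constructor
    · rintro (⟨u, _, rfl⟩ | ⟨u, _, rfl⟩) <;> exact u.2
    · intro hx
      by_cases h : (G.induce B).connectedComponentMk ⟨x, hx⟩ ∈ S
      · exact Or.inl ⟨⟨x, hx⟩, h, rfl⟩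
      · exact Or.inr ⟨⟨x, hx⟩, h, rfl⟩
  · rw [Set.disjoint_left]
    rintro x ⟨u, hu, rfl⟩ ⟨w, hw, hwu⟩
    rw [Subtype.val_injective hwu] at hw
    exact hw hu
  · rintro x ⟨u, hu, rfl⟩ y ⟨w, hw, rfl⟩ hadj
    exact hw ((SimpleGraph.ConnectedComponent.connectedComponentMk_eq_of_adj (G := G.induce B) (v := w) (w := u) hadj.symm) ▸ hu)

set_option linter.unusedSectionVars false in
lemma cutOf_injective : Function.Injective (cutOf G B) := by
  intro S T h
  ext c
  induction c using SimpleGraph.ConnectedComponent.ind with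
  | _ u =>
    have := congrArg Prod.fst h
    simp only [cutOf] at this
    have h2 := Set.ext_iff.mp (Set.image_injective.mpr Subtype.val_injective this) u
    simpa using h2

set_option linter.unusedSectionVars false in
lemma consCut_closed {p : Set V × Set V} (hp : ConsCut G B p) {u w : ↥B}
    (h : (G.induce B).Reachable u w) (hw : (w : V) ∈ p.1) : (u : V) ∈ p.1 := by
  obtain ⟨wlk⟩ := h
  induction wlk with
  | nil => exact hw
  | cons hadj q ih =>
    rename_i a b c
    have hb : (b : V) ∈ p.1 := ih hw
    have ha : (a : V) ∈ p.1 ∪ p.2 := hp.1 ▸ a.2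
    rcases ha with h1 | h2
    · exact h1
    · exact absurd hadj (hp.2.2 _ hb _ h2 ∘ fun h => h.symm)

set_option linter.unusedSectionVars false in
lemma cutOf_surjOn {p : Set V × Set V} (hp : ConsCut G B p) :
    ∃ S, cutOf G B S = p := by
  refine ⟨(G.induce B).connectedComponentMk '' {u : B | (u : V) ∈ p.1}, ?_⟩
  have key : ∀ u : ↥B, (G.induce B).connectedComponentMk u ∈
      (G.induce B).connectedComponentMk '' {u : B | (u : V) ∈ p.1} ↔ (u : V) ∈ p.1 := by
    intro u
    constructor
    · rintro ⟨w, hw, hmk⟩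
      exact consCut_closed G B hp (SimpleGraph.ConnectedComponent.exact hmk).symm hw
    · intro h; exact ⟨u, h, rfl⟩
  have h1 : p.1 ⊆ B := hp.1 ▸ Set.subset_union_left
  have h2 : ∀ x, x ∈ p.2 ↔ x ∈ B ∧ x ∉ p.1 := by
    intro x
    constructor
    · intro hx
      exact ⟨hp.1 ▸ Or.inr hx, fun h1 => Set.disjoint_left.mp hp.2.1 h1 hx⟩
    · rintro ⟨hB, h1⟩
      have : x ∈ p.1 ∪ p.2 := hp.1.symm ▸ hB
      rcases this with h | h
      · exact absurd h h1
      · exact h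
  have e1 : Subtype.val '' {u : B | (G.induce B).connectedComponentMk u ∈
      (G.induce B).connectedComponentMk '' {u : B | (u : V) ∈ p.1}} = p.1 := by
    ext x
    constructor
    · rintro ⟨u, hu, rfl⟩
      exact (key u).mp hu
    · intro hx
      exact ⟨⟨x, h1 hx⟩, (key ⟨x, h1 hx⟩).mpr hx, rfl⟩
  have e2 : Subtype.val '' {u : B | (G.induce B).connectedComponentMk u ∉
      (G.induce B).connectedComponentMk '' {u : B | (u : V) ∈ p.1}} = p.2 := by
    ext x
    constructor
    · rintro ⟨u, hu, rfl⟩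
      exact (h2 u).mpr ⟨u.2, fun h => hu ((key u).mpr h)⟩
    · intro hx
      obtain ⟨hB, hn⟩ := (h2 x).mp hx
      exact ⟨⟨x, hB⟩, fun h => hn ((key ⟨x, hB⟩).mp h), rfl⟩
  exact Prod.ext e1 e2

end Aux

theorem stmt7 (G : SimpleGraph V) (B : Set V) :
    {p : Set V × Set V | ConsCut G B p}.ncard =
      2 ^ Nat.card (G.induce B).ConnectedComponent ∧
    ∀ v ∈ B, {p : Set V × Set V | ConsCut G B p ∧ v ∈ p.1}.ncard =
      2 ^ (Nat.card (G.induce B).ConnectedComponent - 1) := by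
  classical
  haveI : Finite ↥B := Subtype.finite
  haveI : Finite (G.induce B).ConnectedComponent := Quot.finite _
  haveI : Fintype (G.induce B).ConnectedComponent := Fintype.ofFinite _
  set CC := (G.induce B).ConnectedComponent with hCC
  have hbij : Function.Bijective
      (fun S : Set CC => (⟨cutOf G B S, consCut_cutOf G B S⟩ :
        ↥{p : Set V × Set V | ConsCut G B p})) := by
    constructor
    · intro S T h
      exact cutOf_injective G B (congrArg Subtype.val h)
    · rintro ⟨p, hp⟩
      obtain ⟨S, hS⟩ := cutOf_surjOn G B hp
      exact ⟨S, Subtype.ext hS⟩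
  have e := Equiv.ofBijective _ hbij
  constructor
  · rw [← Nat.card_coe_set_eq, ← Nat.card_congr e, Nat.card_eq_fintype_card,
      Fintype.card_set, Nat.card_eq_fintype_card]
  · intro v hv
    set c₀ : CC := (G.induce B).connectedComponentMk ⟨v, hv⟩ with hc₀
    have hmem : ∀ S : Set CC, c₀ ∈ S ↔ v ∈ (cutOf G B S).1 := by
      intro S
      constructor
      · intro h
        exact ⟨⟨v, hv⟩, h, rfl⟩
      · rintro ⟨u, hu, huv⟩
        have : u = ⟨v, hv⟩ := Subtype.ext huv
        rwa [this] at hu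
    have e2 : {S : Set CC // c₀ ∈ S} ≃
        ↥{p : Set V × Set V | ConsCut G B p ∧ v ∈ p.1} := by
      exact ((Equiv.ofBijective _ hbij).subtypeEquiv fun S => hmem S).trans
        (Equiv.subtypeSubtypeEquivSubtypeInter (ConsCut G B) (fun p => v ∈ p.1))
    have e3 : {S : Set CC // c₀ ∈ S} ≃ Set {c : CC // c ≠ c₀} := by
      refine ⟨fun S => {c | (c : CC) ∈ S.1},
        fun T => ⟨insert c₀ (Subtype.val '' T), Set.mem_insert _ _⟩, ?_, ?_⟩
      · rintro ⟨S, hS⟩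
        ext c
        simp only [Set.mem_insert_iff, Set.mem_image, Set.mem_setOf_eq, Subtype.exists]
        constructor
        · rintro (rfl | ⟨a, ha, haS, rfl⟩)
          · exact hS
          · exact haS
        · intro hc
          by_cases h : c = c₀
          · exact Or.inl h
          · exact Or.inr ⟨c, h, hc, rfl⟩
      · intro T
        ext c
        simp only [Set.mem_setOf_eq, Set.mem_insert_iff, Set.mem_image, Subtype.exists]
        constructor
        · rintro (h | ⟨a, ha, haT, hac⟩)
          · exact absurd h c.2
          · rwa [show c = ⟨a, ha⟩ from Subtype.ext hac.symm]
        · intro h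
          exact Or.inr ⟨c, c.2, h, rfl⟩
    rw [← Nat.card_coe_set_eq, ← Nat.card_congr e2, Nat.card_congr e3,
      Nat.card_eq_fintype_card, Fintype.card_set, Nat.card_eq_fintype_card]
    congr 1
    rw [Fintype.card_subtype_compl, Fintype.card_subtype_eq]
end

section
/- Let G be a graph and let B, D be disjoint vertex subsets of G. If the induced subgraph G[B ∪ D] is a tree, then the number of edges of G with one endpoint in B and the other in D equals |cc(B)| + |cc(D)| − 1, where cc(X) denotes the set of connected components of G[X]. -/
/-!
A finite forest has `|V| - #components` edges, since each component is a tree. The edges of the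
tree `G[B ∪ D]` are those of the forests `G[B]` and `G[D]` together with `E(B, D)`, so
`|B| + |D| - 1 = (|B| - |cc(B)|) + (|D| - |cc(D)|) + |E(B, D)|`. Edges are counted as ordered
pairs (darts, or `interedges`), which doubles every count.
-/

namespace SimpleGraph

open Finset

variable {W : Type*} {H : SimpleGraph W}

lemma card_dart_eq_two_mul_card_edgeSet [Finite W] : Nat.card H.Dart = 2 * Nat.card H.edgeSet := by
  classical
  have := Fintype.ofFinite W
  rw [Nat.card_eq_fintype_card, dart_card_eq_twice_card_edges, edgeFinset_card,
    Nat.card_eq_fintype_card]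

def ConnectedComponent.dartEquiv (c : H.ConnectedComponent) :
    c.toSimpleGraph.Dart ≃ {d : H.Dart // H.connectedComponentMk d.fst = c} where
  toFun d := ⟨c.toSimpleGraph_hom.mapDart d, d.fst.2⟩
  invFun d := ⟨(⟨d.1.fst, d.2⟩, ⟨d.1.snd, c.mem_supp_congr_adj d.1.adj |>.mp d.2⟩), d.1.adj⟩
  left_inv _ := rfl
  right_inv _ := rfl

lemma IsAcyclic.card_edgeSet_add_card_connectedComponent [Finite W] (h : H.IsAcyclic) :
    Nat.card H.edgeSet + Nat.card H.ConnectedComponent = Nat.card W := by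
  classical
  have := Fintype.ofFinite W
  have := Fintype.ofFinite H.ConnectedComponent
  have hverts : Nat.card W = ∑ c : H.ConnectedComponent, Nat.card c.supp := by
    rw [← Nat.card_congr (Equiv.sigmaFiberEquiv H.connectedComponentMk), Nat.card_sigma]
    rfl
  have hdarts : Nat.card H.Dart = ∑ c : H.ConnectedComponent, Nat.card c.toSimpleGraph.Dart := by
    rw [← Nat.card_congr (Equiv.sigmaFiberEquiv fun d : H.Dart ↦ H.connectedComponentMk d.fst),
      Nat.card_sigma]
    exact sum_congr rfl fun c _ ↦ Nat.card_congr c.dartEquiv.symm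
  have htree (c : H.ConnectedComponent) : Nat.card c.toSimpleGraph.edgeSet + 1 = Nat.card c.supp :=
    (isTree_iff_connected_and_card.mp (h.isTree_connectedComponent c)).2
  suffices 2 * (Nat.card H.edgeSet + Nat.card H.ConnectedComponent) = 2 * Nat.card W by omega
  calc 2 * (Nat.card H.edgeSet + Nat.card H.ConnectedComponent)
      = Nat.card H.Dart + ∑ _c : H.ConnectedComponent, 2 := by
        rw [card_dart_eq_two_mul_card_edgeSet, sum_const, card_univ,
          ← Nat.card_eq_fintype_card, smul_eq_mul]
        ring
    _ = ∑ c : H.ConnectedComponent, (Nat.card c.toSimpleGraph.Dart + 2) := by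
        rw [hdarts, sum_add_distrib]
    _ = ∑ c : H.ConnectedComponent, 2 * Nat.card c.supp :=
        sum_congr rfl fun c _ ↦ by rw [card_dart_eq_two_mul_card_edgeSet, ← htree]; ring
    _ = 2 * Nat.card W := by rw [hverts, mul_sum]

section Interedges

variable {V : Type*} (G : SimpleGraph V) [DecidableRel G.Adj] {s s₁ s₂ t t₁ t₂ : Finset V}

lemma card_interedges_comm (s t : Finset V) : #(G.interedges s t) = #(G.interedges t s) :=
  have := G.symm
  Rel.card_interedges_comm s t

lemma interedges_union_left [DecidableEq V] (s₁ s₂ t : Finset V) :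
    G.interedges (s₁ ∪ s₂) t = G.interedges s₁ t ∪ G.interedges s₂ t := by
  ext
  simp only [mem_union, mem_interedges_iff]
  tauto

lemma card_interedges_union_left [DecidableEq V] (h : Disjoint s₁ s₂) (t : Finset V) :
    #(G.interedges (s₁ ∪ s₂) t) = #(G.interedges s₁ t) + #(G.interedges s₂ t) := by
  rw [interedges_union_left, card_union_of_disjoint (G.interedges_disjoint_left h t)]

lemma card_interedges_union_right [DecidableEq V] (s : Finset V) (h : Disjoint t₁ t₂) :
    #(G.interedges s (t₁ ∪ t₂)) = #(G.interedges s t₁) + #(G.interedges s t₂) := by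
  simp only [G.card_interedges_comm s, card_interedges_union_left G h]

def interedgesSelfEquivDart (s : Finset V) : G.interedges s s ≃ (G.induce (s : Set V)).Dart where
  toFun p := ⟨(⟨p.1.1, (G.mem_interedges_iff.1 p.2).1⟩, ⟨p.1.2, (G.mem_interedges_iff.1 p.2).2.1⟩),
    (G.mem_interedges_iff.1 p.2).2.2⟩
  invFun d := ⟨(d.fst, d.snd), G.mem_interedges_iff.2 ⟨d.fst.2, d.snd.2, d.adj⟩⟩
  left_inv _ := rfl
  right_inv _ := rfl

lemma card_interedges_self (s : Finset V) :
    #(G.interedges s s) = 2 * Nat.card (G.induce (s : Set V)).edgeSet := by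
  rw [← card_dart_eq_two_mul_card_edgeSet, ← Nat.card_congr (G.interedgesSelfEquivDart s),
    Nat.card_eq_finsetCard]

theorem card_interedges_add_one_of_isTree [DecidableEq V] (h : Disjoint s t)
    (htree : (G.induce ((s ∪ t : Finset V) : Set V)).IsTree) :
    #(G.interedges s t) + 1 =
      Nat.card (G.induce (s : Set V)).ConnectedComponent +
        Nat.card (G.induce (t : Set V)).ConnectedComponent := by
  have hforest {u : Finset V} (hu : u ⊆ s ∪ t) :
      Nat.card (G.induce (u : Set V)).edgeSet + Nat.card (G.induce (u : Set V)).ConnectedComponent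
        = #u := by
    rw [← Nat.card_eq_finsetCard]
    exact (htree.isAcyclic.embedding (G.induceHomOfLE (coe_subset.2 hu)))
      |>.card_edgeSet_add_card_connectedComponent
  have htree_card : Nat.card (G.induce ((s ∪ t : Finset V) : Set V)).edgeSet + 1 = #s + #t := by
    rw [← card_union_of_disjoint h, ← Nat.card_eq_finsetCard]
    exact (isTree_iff_connected_and_card.mp htree).2
  have hsplit : #(G.interedges (s ∪ t) (s ∪ t)) =
      #(G.interedges s s) + #(G.interedges t t) + 2 * #(G.interedges s t) := by
    rw [card_interedges_union_left G h, card_interedges_union_right G _ h,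
      card_interedges_union_right G _ h, G.card_interedges_comm t s]
    ring
  simp only [card_interedges_self] at hsplit
  have := hforest subset_union_left
  have := hforest subset_union_right
  omega

end Interedges

end SimpleGraph

open SimpleGraph

variable {V : Type*} [Fintype V] [DecidableEq V]

theorem stmt9 (G : SimpleGraph V) (B D : Set V) (hdisj : Disjoint B D)
    (htree : (G.induce (B ∪ D)).IsTree) :
    {p : V × V | p.1 ∈ B ∧ p.2 ∈ D ∧ G.Adj p.1 p.2}.ncard =
      Nat.card (G.induce B).ConnectedComponent +
        Nat.card (G.induce D).ConnectedComponent - 1 := by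
  classical
  have hpairs : {p : V × V | p.1 ∈ B ∧ p.2 ∈ D ∧ G.Adj p.1 p.2} =
      G.interedges B.toFinset D.toFinset := by
    ext
    simp [mem_interedges_iff]
  have key := G.card_interedges_add_one_of_isTree (Set.disjoint_toFinset.2 hdisj)
    (by rwa [Finset.coe_union, Set.coe_toFinset, Set.coe_toFinset])
  rw [Set.coe_toFinset, Set.coe_toFinset] at key
  rw [hpairs, Set.ncard_coe_finset]
  omega
end

section
/- Let G be a graph and X, Y disjoint vertex subsets such that G[X ∪ Y] is a forest. Then the number of vertices in X that have at least two neighbors in Y is at most 2w, where w is the size of a maximum induced matching in the bipartite graph G[X, Y] (the graph on X ∪ Y with exactly the edges of G between X and Y). -/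
open SimpleGraph

variable {V : Type*} [Fintype V] [DecidableEq V]

/-- The bipartite graph `G[X, Y]` on the whole vertex set: exactly the edges of `G`
with one endpoint in `X` and the other in `Y`. -/
def bipGraph (G : SimpleGraph V) (X Y : Set V) : SimpleGraph V where
  Adj u v := G.Adj u v ∧ ((u ∈ X ∧ v ∈ Y) ∨ (u ∈ Y ∧ v ∈ X))
  symm := by
    constructor
    intro u v h
    exact ⟨h.1.symm, h.2.elim (fun hx => Or.inr ⟨hx.2, hx.1⟩) (fun hx => Or.inl ⟨hx.2, hx.1⟩)⟩
  loopless := by constructor; intro v h; exact G.irrefl h.1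

/-- An induced matching in `H`: a matching such that the subgraph induced by its
endpoints has no further edges. -/
def IsInducedMatching (H : SimpleGraph V) (M : H.Subgraph) : Prop :=
  M.IsMatching ∧ ∀ u v, u ∈ M.verts → v ∈ M.verts → H.Adj u v → M.Adj u v

/-!
Root every component of the forest `G[X, Y]` and let `depth` be the distance to the root. Since
parents are unique, every `x ∈ X` with two neighbours in `Y` has a child `c x`, and the only
neighbours of `c x` besides `x` are grandchildren of `x`. Hence two edges `x (c x)` and
`y (c y)` are joined by an edge only if the depths of `x` and `y` differ by exactly two.
Splitting these vertices according to the parity of `⌊depth / 2⌋` therefore yields two induced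
matchings, the larger of which has at least half as many edges as there are such vertices.
-/

namespace SimpleGraph

variable {α : Type*} {H : SimpleGraph α}

theorem IsAcyclic.of_induce {s : Set α} (hs : ∀ ⦃u v⦄, H.Adj u v → u ∈ s)
    (h : (H.induce s).IsAcyclic) : H.IsAcyclic := by
  intro v c hc
  have htail : ∀ x ∈ c.support.tail, x ∈ s := by
    rw [← c.map_snd_darts]
    intro x hx
    obtain ⟨d, -, rfl⟩ := List.mem_map.mp hx
    exact hs d.adj.symm
  have hsupp : ∀ x ∈ c.support, x ∈ s := by
    intro x hx
    rw [← c.cons_tail_support, List.mem_cons] at hx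
    rcases hx with rfl | hx
    · exact htail _ (Walk.end_mem_tail_support hc.not_nil)
    · exact htail x hx
  exact h (c.induce s hsupp) (Walk.IsCycle.of_map (f := (Embedding.induce s).toHom)
    (by rwa [Walk.map_induce]))

theorem IsAcyclic.eq_of_adj_of_dist_add_one (hH : H.IsAcyclic) {r u z₁ z₂ : α}
    (hr : H.Reachable r u) (h₁ : H.Adj z₁ u) (h₂ : H.Adj z₂ u)
    (e₁ : H.dist r z₁ + 1 = H.dist r u) (e₂ : H.dist r z₂ + 1 = H.dist r u) : z₁ = z₂ := by
  classical
  obtain ⟨p, hp, -⟩ := hr.exists_path_of_dist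
  suffices h : ∀ z, H.Adj z u → H.dist r z + 1 = H.dist r u → z = p.penultimate from
    (h z₁ h₁ e₁).trans (h z₂ h₂ e₂).symm
  intro z hz e
  obtain ⟨q, hq, hqlen⟩ := (hr.trans hz.symm.reachable).exists_path_of_dist
  have hu : u ∉ q.support := fun hu => by
    have := (dist_le (q.takeUntil u hu)).trans (q.length_takeUntil_le_length hu)
    omega
  exact hH.eq_penultimate_of_adj_end hp hz.symm
    (hH.mem_support_of_ne_mem_support_of_adj_of_isPath hp hq hz.symm hu)

/-- The distance to an arbitrarily chosen root of the connected component. -/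
noncomputable def depth (H : SimpleGraph α) (v : α) : ℕ :=
  H.dist (H.connectedComponentMk v).out v

theorem reachable_out_connectedComponentMk (v : α) :
    H.Reachable (H.connectedComponentMk v).out v :=
  ConnectedComponent.exact (Quot.out_eq _)

theorem IsAcyclic.depth_eq_depth_add_one_of_adj (hH : H.IsAcyclic) {u v : α} (h : H.Adj u v) :
    H.depth u = H.depth v + 1 ∨ H.depth v = H.depth u + 1 := by
  have hC : H.connectedComponentMk v = H.connectedComponentMk u :=
    (ConnectedComponent.sound h.reachable).symm
  unfold depth
  rw [hC]
  exact hH.dist_eq_dist_add_one_of_adj_of_reachable _ h (reachable_out_connectedComponentMk u)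

theorem IsAcyclic.eq_of_adj_of_depth_add_one (hH : H.IsAcyclic) {u z₁ z₂ : α}
    (h₁ : H.Adj z₁ u) (h₂ : H.Adj z₂ u)
    (e₁ : H.depth z₁ + 1 = H.depth u) (e₂ : H.depth z₂ + 1 = H.depth u) : z₁ = z₂ := by
  have hC₁ := ConnectedComponent.sound h₁.reachable
  have hC₂ := ConnectedComponent.sound h₂.reachable
  unfold depth at e₁ e₂
  rw [hC₁] at e₁
  rw [hC₂] at e₂
  exact hH.eq_of_adj_of_dist_add_one (reachable_out_connectedComponentMk u) h₁ h₂ e₁ e₂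

theorem IsAcyclic.exists_adj_depth_eq_add_one (hH : H.IsAcyclic) {x : α}
    (hx : 2 ≤ (H.neighborSet x).ncard) : ∃ c, H.Adj x c ∧ H.depth c = H.depth x + 1 := by
  obtain ⟨a, b, ha, hb, hab⟩ :=
    (Set.one_lt_ncard_iff (Set.finite_of_ncard_pos (by omega))).mp hx
  by_contra! hchild
  have hparent : ∀ c, H.Adj x c → H.depth c + 1 = H.depth x := fun c hc =>
    ((hH.depth_eq_depth_add_one_of_adj hc).resolve_right (hchild c hc)).symm
  exact hab (hH.eq_of_adj_of_depth_add_one (H.adj_symm ha) (H.adj_symm hb)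
    (hparent a ha) (hparent b hb))

theorem IsAcyclic.eq_or_depth_eq_add_two (hH : H.IsAcyclic) {x y c : α} (hy : H.Adj y c)
    (hc : H.depth c = H.depth y + 1) (hx : H.Adj x c) : x = y ∨ H.depth x = H.depth y + 2 := by
  rcases hH.depth_eq_depth_add_one_of_adj hx with h | h
  · exact Or.inr (by omega)
  · exact Or.inl (hH.eq_of_adj_of_depth_add_one hx hy (by omega) (by omega))

theorem isInducedMatching_iSup_subgraphOfAdj {T : Set α} {f : α → α}
    (hadj : ∀ x ∈ T, H.Adj x (f x)) (hT : H.IsIndepSet T)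
    (hfT : ∀ x ∈ T, ∀ y ∈ T, ¬H.Adj (f x) (f y))
    (hcross : ∀ x ∈ T, ∀ y ∈ T, H.Adj x (f y) → x = y) :
    IsInducedMatching H (⨆ x : T, H.subgraphOfAdj (hadj x x.2)) := by
  refine ⟨Subgraph.IsMatching.iSup (fun x => .subgraphOfAdj _) ?_, ?_⟩
  · rintro ⟨x, hx⟩ ⟨y, hy⟩ hne
    have hxy : x ≠ y := fun h => hne (Subtype.ext h)
    have hxfy : x ≠ f y := fun h => hT hy hx hxy.symm (by rw [h]; exact hadj y hy)
    have hfxy : f x ≠ y := fun h => hT hx hy hxy (by rw [← h]; exact hadj x hx)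
    have hfxfy : f x ≠ f y := fun h => hxy (hcross x hx y hy (h ▸ hadj x hx))
    simp only [support_subgraphOfAdj, Set.disjoint_left, Set.mem_insert_iff,
      Set.mem_singleton_iff]
    rintro z (rfl | rfl) (h | h)
    exacts [hxy h, hxfy h, hfxy h, hfxfy h]
  · simp only [Subgraph.verts_iSup, subgraphOfAdj_verts, Set.mem_iUnion, Set.mem_insert_iff,
      Set.mem_singleton_iff, Subgraph.iSup_adj, subgraphOfAdj_adj, Subtype.exists]
    rintro u v ⟨x, hx, rfl | rfl⟩ ⟨y, hy, rfl | rfl⟩ huv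
    · exact absurd huv (hT hx hy (H.ne_of_adj huv))
    · obtain rfl := hcross u hx y hy huv
      exact ⟨u, hx, rfl⟩
    · obtain rfl := hcross v hy x hx huv.symm
      exact ⟨v, hy, Sym2.eq_swap⟩
    · exact absurd huv (hfT x hx y hy)

theorem ncard_edgeSet_iSup_subgraphOfAdj {T : Set α} {f : α → α}
    (hadj : ∀ x ∈ T, H.Adj x (f x)) (hT : H.IsIndepSet T) :
    (⨆ x : T, H.subgraphOfAdj (hadj x x.2)).edgeSet.ncard = T.ncard := by
  have hedges :
      (⨆ x : T, H.subgraphOfAdj (hadj x x.2)).edgeSet = (fun x => s(x, f x)) '' T := by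
    ext e
    simp [Subgraph.edgeSet_iSup, eq_comm]
  rw [hedges, Set.InjOn.ncard_image]
  intro x hx y hy hxy
  rcases Sym2.eq_iff.mp hxy with ⟨h, -⟩ | ⟨-, h⟩
  · exact h
  · by_contra hne
    exact hT hx hy hne (h ▸ hadj x hx)

variable {S : Set α} {c : α → α}

theorem IsAcyclic.not_adj_of_isIndepSet_of_depth_eq_add_one (hH : H.IsAcyclic)
    (hS : H.IsIndepSet S)
    (hc_adj : ∀ x ∈ S, H.Adj x (c x)) (hc_depth : ∀ x ∈ S, H.depth (c x) = H.depth x + 1)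
    {x y : α} (hx : x ∈ S) (hy : y ∈ S) : ¬H.Adj (c x) (c y) := by
  intro h
  rcases hH.eq_or_depth_eq_add_two (hc_adj y hy) (hc_depth y hy) h with hxy | hxy
  · exact hS hx hy (H.ne_of_adj (hxy ▸ hc_adj x hx)) (hxy ▸ hc_adj x hx)
  rcases hH.eq_or_depth_eq_add_two (hc_adj x hx) (hc_depth x hx) h.symm with hyx | hyx
  · exact hS hy hx (H.ne_of_adj (hyx ▸ hc_adj y hy)) (hyx ▸ hc_adj y hy)
  have := hc_depth x hx
  have := hc_depth y hy
  omega

theorem IsAcyclic.isInducedMatching_iSup_of_depth_div_two_mod_two_eq (hH : H.IsAcyclic)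
    (hS : H.IsIndepSet S)
    (hc_adj : ∀ x ∈ S, H.Adj x (c x)) (hc_depth : ∀ x ∈ S, H.depth (c x) = H.depth x + 1)
    (j : ℕ) :
    IsInducedMatching H (⨆ x : {x ∈ S | H.depth x / 2 % 2 = j},
      H.subgraphOfAdj (hc_adj x x.2.1)) := by
  refine isInducedMatching_iSup_subgraphOfAdj (fun x hx => hc_adj x hx.1)
    (hS.mono (Set.sep_subset _ _))
    (fun _ hx _ hy => hH.not_adj_of_isIndepSet_of_depth_eq_add_one hS hc_adj hc_depth hx.1 hy.1)
    ?_
  intro x hx y hy h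
  -- a grandchild lies in the other class
  refine (hH.eq_or_depth_eq_add_two (hc_adj y hy.1) (hc_depth y hy.1) h).resolve_right ?_
  have := hx.2.trans hy.2.symm
  omega

theorem IsAcyclic.exists_isInducedMatching_ncard_le_two_mul (hH : H.IsAcyclic)
    (hS : H.IsIndepSet S) (hdeg : ∀ x ∈ S, 2 ≤ (H.neighborSet x).ncard) :
    ∃ M : H.Subgraph, IsInducedMatching H M ∧ S.ncard ≤ 2 * M.edgeSet.ncard := by
  choose! c hc_adj hc_depth using fun x hx => hH.exists_adj_depth_eq_add_one (hdeg x hx)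
  set T : ℕ → Set α := fun j => {x ∈ S | H.depth x / 2 % 2 = j}
  have hS_eq : S = T 0 ∪ T 1 := by
    ext x
    have := Nat.mod_two_eq_zero_or_one (H.depth x / 2)
    simp only [T, Set.mem_union, Set.mem_ofPred_eq]
    tauto
  have hsplit : S.ncard ≤ (T 0).ncard + (T 1).ncard := by
    rw [hS_eq]
    exact Set.ncard_union_le _ _
  obtain ⟨j, hj⟩ : ∃ j, S.ncard ≤ 2 * (T j).ncard := by
    by_cases h : (T 1).ncard ≤ (T 0).ncard
    · exact ⟨0, by omega⟩
    · exact ⟨1, by omega⟩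
  refine ⟨_, hH.isInducedMatching_iSup_of_depth_div_two_mod_two_eq hS hc_adj hc_depth j, ?_⟩
  rwa [ncard_edgeSet_iSup_subgraphOfAdj (fun x hx => hc_adj x hx.1)
    (hS.mono (Set.sep_subset _ _))]

end SimpleGraph

section bipGraph

variable {α : Type*} {G : SimpleGraph α} {X Y : Set α}

theorem bipGraph_neighborSet_of_mem_left (hXY : Disjoint X Y) {v : α} (hv : v ∈ X) :
    (bipGraph G X Y).neighborSet v = G.neighborSet v ∩ Y := by
  ext w
  constructor
  · rintro ⟨h, ⟨-, hw⟩ | ⟨hvY, -⟩⟩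
    exacts [⟨h, hw⟩, absurd hvY (hXY.notMem_of_mem_left hv)]
  · rintro ⟨h, hw⟩
    exact ⟨h, .inl ⟨hv, hw⟩⟩

theorem isIndepSet_bipGraph_left (hXY : Disjoint X Y) : (bipGraph G X Y).IsIndepSet X := by
  intro u hu v hv _ h
  rcases h.2 with ⟨-, hvY⟩ | ⟨huY, -⟩
  exacts [hXY.notMem_of_mem_left hv hvY, hXY.notMem_of_mem_left hu huY]

theorem isAcyclic_bipGraph (h : (G.induce (X ∪ Y)).IsAcyclic) : (bipGraph G X Y).IsAcyclic :=
  .of_induce (fun _ _ huv => huv.2.elim (fun h => .inl h.1) (fun h => .inr h.1))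
    (h.anti fun _ _ huv => huv.1)

end bipGraph

theorem stmt13 (G : SimpleGraph V) (X Y : Set V) (hdisj : Disjoint X Y)
    (hforest : (G.induce (X ∪ Y)).IsAcyclic) (w : ℕ)
    (hw : ∀ M : (bipGraph G X Y).Subgraph,
      IsInducedMatching (bipGraph G X Y) M → M.edgeSet.ncard ≤ w) :
    {v | v ∈ X ∧ 2 ≤ (G.neighborSet v ∩ Y).ncard}.ncard ≤ 2 * w := by
  set S := {v | v ∈ X ∧ 2 ≤ (G.neighborSet v ∩ Y).ncard}
  have hS : (bipGraph G X Y).IsIndepSet S := (isIndepSet_bipGraph_left hdisj).mono fun _ hv => hv.1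
  have hdeg : ∀ x ∈ S, 2 ≤ ((bipGraph G X Y).neighborSet x).ncard := fun x hx =>
    (bipGraph_neighborSet_of_mem_left hdisj hx.1).symm ▸ hx.2
  obtain ⟨M, hM, hcard⟩ :=
    (isAcyclic_bipGraph hforest).exists_isInducedMatching_ncard_le_two_mul hS hdeg
  exact hcard.trans (Nat.mul_le_mul_left 2 (hw M hM))
end

section
/- Fix a k-problem Π on a k-weighted graph G (an assignment of a solution set Π(G) ⊆ P(V(G))^k, together with a weight function obj on k-tuples of vertex subsets that is additive over disjoint supports). Let A₁, A₂ be disjoint subsets of V(G), and let 𝓑₁ ⊆ P(A₁)^k, 𝓑₂ ⊆ P(A₂)^k. If 𝓑₁ represents P(A₁)^k over A₁ and 𝓑₂ represents P(A₂)^k over A₂, then 𝓑₁ ⊗ 𝓑₂ := {B₁ ∪ B₂ : B₁ ∈ 𝓑₁, B₂ ∈ 𝓑₂} (componentwise union) represents P(A₁ ∪ A₂)^k over A₁ ∪ A₂. -/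
variable {V : Type*} [Fintype V] {k : ℕ}

/-- The weight of a `k`-tuple of vertex subsets: `obj(B) = Σ_v w(v, {i : v ∈ B_i})`. -/
noncomputable def obj (w : V → (Fin k → Prop) → ℤ) (B : Fin k → Set V) : ℤ :=
  ∑ v : V, w v (fun i => v ∈ B i)

/-- `best(𝓑, D)`: the maximum weight of a tuple `B ∈ 𝓑` whose componentwise union
with `D` is a solution; `⊥` (i.e. `−∞`) if there is none. -/
noncomputable def best (Prob : Set (Fin k → Set V)) (w : V → (Fin k → Prop) → ℤ)
    (𝓑 : Set (Fin k → Set V)) (D : Fin k → Set V) : WithBot ℤ :=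
  sSup ((fun B => ((obj w B : ℤ) : WithBot ℤ)) ''
    {B | B ∈ 𝓑 ∧ (fun i => B i ∪ D i) ∈ Prob})

/-- `𝓑₁` represents `𝓑₂` over `A`. -/
def Represents (Prob : Set (Fin k → Set V)) (w : V → (Fin k → Prop) → ℤ) (A : Set V)
    (𝓑₁ 𝓑₂ : Set (Fin k → Set V)) : Prop :=
  ∀ D : Fin k → Set V, (∀ i, D i ⊆ Aᶜ) → best Prob w 𝓑₁ D = best Prob w 𝓑₂ D

lemma le_best (Prob : Set (Fin k → Set V)) (w : V → (Fin k → Prop) → ℤ)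
    (𝓑 : Set (Fin k → Set V)) (D : Fin k → Set V) {B : Fin k → Set V}
    (hB : B ∈ 𝓑) (h : (fun i => B i ∪ D i) ∈ Prob) :
    ((obj w B : ℤ) : WithBot ℤ) ≤ best Prob w 𝓑 D := by
  apply le_csSup
  · exact (Set.toFinite _).bddAbove
  · exact ⟨B, ⟨hB, h⟩, rfl⟩

lemma best_le (Prob : Set (Fin k → Set V)) (w : V → (Fin k → Prop) → ℤ)
    (𝓑 : Set (Fin k → Set V)) (D : Fin k → Set V) {a : WithBot ℤ}
    (h : ∀ B ∈ 𝓑, (fun i => B i ∪ D i) ∈ Prob → ((obj w B : ℤ) : WithBot ℤ) ≤ a) :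
    best Prob w 𝓑 D ≤ a := by
  rcases Set.eq_empty_or_nonempty
      ((fun B => ((obj w B : ℤ) : WithBot ℤ)) ''
        {B | B ∈ 𝓑 ∧ (fun i => B i ∪ D i) ∈ Prob}) with he | hne
  · rw [best, he, WithBot.sSup_empty]; exact bot_le
  · apply csSup_le hne
    rintro x ⟨B, ⟨h1, h2⟩, rfl⟩
    exact h B h1 h2

lemma exists_of_le_best (Prob : Set (Fin k → Set V)) (w : V → (Fin k → Prop) → ℤ)
    (𝓑 : Set (Fin k → Set V)) (D : Fin k → Set V) {x : ℤ}
    (h : ((x : ℤ) : WithBot ℤ) ≤ best Prob w 𝓑 D) :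
    ∃ B ∈ 𝓑, (fun i => B i ∪ D i) ∈ Prob ∧ x ≤ obj w B := by
  by_contra hcon
  push_neg at hcon
  have hle : best Prob w 𝓑 D ≤ ((x - 1 : ℤ) : WithBot ℤ) := by
    apply best_le
    intro B hB hPB
    have := hcon B hB hPB
    exact_mod_cast (by omega : obj w B ≤ x - 1)
  have : ((x : ℤ) : WithBot ℤ) ≤ ((x - 1 : ℤ) : WithBot ℤ) := h.trans hle
  have : (x : ℤ) ≤ x - 1 := by exact_mod_cast this
  omega

lemma obj_union_add (w : V → (Fin k → Prop) → ℤ) {A₁ A₂ : Set V} (hA : Disjoint A₁ A₂)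
    {B₁ B₂ : Fin k → Set V} (h₁ : ∀ i, B₁ i ⊆ A₁) (h₂ : ∀ i, B₂ i ⊆ A₂) :
    obj w (fun i => B₁ i ∪ B₂ i) + obj w (fun _ => (∅ : Set V)) = obj w B₁ + obj w B₂ := by
  unfold obj
  rw [← Finset.sum_add_distrib, ← Finset.sum_add_distrib]
  apply Finset.sum_congr rfl
  intro v _
  by_cases hv : v ∈ A₁
  · have hvB₂ : ∀ i, v ∉ B₂ i := fun i hvi => (hA.le_bot ⟨hv, h₂ i hvi⟩)
    have e1 : (fun i => v ∈ B₁ i ∪ B₂ i) = fun i => v ∈ B₁ i := by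
      funext i; exact propext (by simp [hvB₂ i])
    have e2 : (fun i => v ∈ B₂ i) = fun _ : Fin k => v ∈ (∅ : Set V) := by
      funext i; simp [hvB₂ i]
    rw [e1, e2]
  · have hvB₁ : ∀ i, v ∉ B₁ i := fun i hvi => hv (h₁ i hvi)
    have e1 : (fun i => v ∈ B₁ i ∪ B₂ i) = fun i => v ∈ B₂ i := by
      funext i; exact propext (by simp [hvB₁ i])
    have e2 : (fun i => v ∈ B₁ i) = fun _ : Fin k => v ∈ (∅ : Set V) := by
      funext i; simp [hvB₁ i]
    rw [e1, e2]; exact add_comm _ _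

theorem stmt16 (Prob : Set (Fin k → Set V)) (w : V → (Fin k → Prop) → ℤ)
    (A₁ A₂ : Set V) (hA : Disjoint A₁ A₂)
    (𝓑₁ 𝓑₂ : Set (Fin k → Set V))
    (h𝓑₁ : ∀ B ∈ 𝓑₁, ∀ i, B i ⊆ A₁) (h𝓑₂ : ∀ B ∈ 𝓑₂, ∀ i, B i ⊆ A₂)
    (hrep₁ : Represents Prob w A₁ 𝓑₁ {B | ∀ i, B i ⊆ A₁})
    (hrep₂ : Represents Prob w A₂ 𝓑₂ {B | ∀ i, B i ⊆ A₂}) :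
    Represents Prob w (A₁ ∪ A₂)
      {B | ∃ B₁ ∈ 𝓑₁, ∃ B₂ ∈ 𝓑₂, B = fun i => B₁ i ∪ B₂ i}
      {B | ∀ i, B i ⊆ A₁ ∪ A₂} := by
  intro D hD
  have hDA₁ : ∀ i, D i ⊆ A₁ᶜ := fun i v hv => fun hv1 => (hD i hv) (Or.inl hv1)
  have hDA₂ : ∀ i, D i ⊆ A₂ᶜ := fun i v hv => fun hv2 => (hD i hv) (Or.inr hv2)
  have hA₂A₁ : A₂ ⊆ A₁ᶜ := fun v hv2 hv1 => hA.le_bot ⟨hv1, hv2⟩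
  have hA₁A₂ : A₁ ⊆ A₂ᶜ := fun v hv1 hv2 => hA.le_bot ⟨hv1, hv2⟩
  apply le_antisymm
  · -- product ≤ full
    apply best_le
    rintro B ⟨B₁, hB₁, B₂, hB₂, rfl⟩ hprob
    apply le_best
    · intro i v hv
      rcases hv with hv | hv
      · exact Or.inl (h𝓑₁ B₁ hB₁ i hv)
      · exact Or.inr (h𝓑₂ B₂ hB₂ i hv)
    · exact hprob
  · -- full ≤ product
    apply best_le
    intro C hC hprob
    set C₁ : Fin k → Set V := fun i => C i ∩ A₁ with hC₁def
    set C₂ : Fin k → Set V := fun i => C i ∩ A₂ with hC₂def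
    have hC12 : ∀ i, C i = C₁ i ∪ C₂ i := by
      intro i
      rw [hC₁def, hC₂def, ← Set.inter_union_distrib_left, Set.inter_eq_left.mpr (hC i)]
    have hC₁sub : ∀ i, C₁ i ⊆ A₁ := fun i => Set.inter_subset_right
    have hC₂sub : ∀ i, C₂ i ⊆ A₂ := fun i => Set.inter_subset_right
    -- Step 1: use hrep₁ with D' = C₂ ∪ D
    have h1 : ((obj w C₁ : ℤ) : WithBot ℤ) ≤ best Prob w 𝓑₁ (fun i => C₂ i ∪ D i) := by
      rw [hrep₁ _ (fun i => Set.union_subset ((hC₂sub i).trans hA₂A₁) (hDA₁ i))]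
      have hmem : (fun i => C₁ i ∪ (C₂ i ∪ D i)) ∈ Prob := by
        have he : (fun i => C₁ i ∪ (C₂ i ∪ D i)) = fun i => C i ∪ D i := by
          funext i; rw [← Set.union_assoc, ← hC12]
        rw [he]; exact hprob
      exact le_best _ _ _ _ hC₁sub hmem
    obtain ⟨B₁, hB₁, hB₁prob, hB₁obj⟩ := exists_of_le_best _ _ _ _ h1
    -- Step 2: use hrep₂ with D' = B₁ ∪ D
    have h2 : ((obj w C₂ : ℤ) : WithBot ℤ) ≤ best Prob w 𝓑₂ (fun i => B₁ i ∪ D i) := by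
      rw [hrep₂ _ (fun i => Set.union_subset ((h𝓑₁ B₁ hB₁ i).trans hA₁A₂) (hDA₂ i))]
      have hmem : (fun i => C₂ i ∪ (B₁ i ∪ D i)) ∈ Prob := by
        have he : (fun i => C₂ i ∪ (B₁ i ∪ D i)) = fun i => B₁ i ∪ (C₂ i ∪ D i) := by
          funext i
          rw [← Set.union_assoc, ← Set.union_assoc, Set.union_comm (C₂ i) (B₁ i)]
        rw [he]; exact hB₁prob
      exact le_best _ _ _ _ hC₂sub hmem
    obtain ⟨B₂, hB₂, hB₂prob, hB₂obj⟩ := exists_of_le_best _ _ _ _ h2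
    -- Combine
    have hobjC : obj w C + obj w (fun _ => (∅ : Set V)) = obj w C₁ + obj w C₂ := by
      have : C = fun i => C₁ i ∪ C₂ i := funext hC12
      rw [this]
      exact obj_union_add w hA hC₁sub hC₂sub
    have hobjB : obj w (fun i => B₁ i ∪ B₂ i) + obj w (fun _ => (∅ : Set V))
        = obj w B₁ + obj w B₂ :=
      obj_union_add w hA (h𝓑₁ B₁ hB₁) (h𝓑₂ B₂ hB₂)
    have hle : obj w C ≤ obj w (fun i => B₁ i ∪ B₂ i) := by
      have h3 : obj w C₁ + obj w C₂ ≤ obj w B₁ + obj w B₂ := add_le_add hB₁obj hB₂obj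
      omega
    calc ((obj w C : ℤ) : WithBot ℤ)
        ≤ ((obj w (fun i => B₁ i ∪ B₂ i) : ℤ) : WithBot ℤ) := by exact_mod_cast hle
      _ ≤ _ := by
          apply le_best
          · exact ⟨B₁, hB₁, B₂, hB₂, rfl⟩
          · have : (fun i => (B₁ i ∪ B₂ i) ∪ D i) = fun i => B₂ i ∪ (B₁ i ∪ D i) := by
              funext i
              rw [← Set.union_assoc, Set.union_comm (B₂ i) (B₁ i)]
            rw [this]; exact hB₂prob
end
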